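/- Suppose φ is entire with φ^(n)(ξ) ≠ 0 for all n, z₀ ∈ ℂ, and for each N let b_j = exp(2πij/N), c_j = ξ − b_j z₀ (j = 1,…,N). Given target coefficients g_0,…,g_{N−1} ∈ ℂ, there exist unique a_1,…,a_N ∈ ℂ such that the function g̃(z) = ∑_{j=1}^N a_j φ(b_j z + c_j) satisfies g̃^(n)(z₀)/n! = g_n for all n = 0,…,N−1. Moreover max_j |a_j| ≤ max_{0≤n≤N−1} |g_n · n! / φ^(n)(ξ)|. -/

import Mathlib

/-!
Since `b j * z₀ + c j = ξ`, differentiating `n` times gives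
`g̃⁽ⁿ⁾(z₀) = (∑ j, a j * b j ^ n) * φ⁽ⁿ⁾(ξ)`, so the interpolation conditions say that
`a ᵥ* V = s` for the Vandermonde matrix `V` of the nodes `b j` and
`s n = g n * n! / φ⁽ⁿ⁾(ξ)`. The nodes are the `N` distinct `N`-th roots of unity, so the
entries of `V * (V(b⁻¹))ᵀ` are geometric sums of roots of unity, and
`V⁻¹ = N⁻¹ • (V(b⁻¹))ᵀ`. This gives existence and uniqueness, and since every entry of
`V⁻¹` has modulus `1 / N`, also `‖a‖∞ ≤ ‖s‖∞`.
-/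

open Complex Finset Matrix

section IteratedDeriv

variable {𝕜 : Type*} [NontriviallyNormedField 𝕜] {n : ℕ} {f : 𝕜 → 𝕜}

theorem iteratedDeriv_comp_mul_add (hf : ContDiff 𝕜 n f) (b c z : 𝕜) :
    iteratedDeriv n (fun z => f (b * z + c)) z = b ^ n * iteratedDeriv n f (b * z + c) := by
  have hf_shift : ContDiff 𝕜 n fun w => f (w + c) := hf.comp (contDiff_id.add contDiff_const)
  rw [iteratedDeriv_comp_const_mul hf_shift b, iteratedDeriv_comp_add_const]

theorem iteratedDeriv_sum_mul_comp_mul_add {ι : Type*} (s : Finset ι) (hf : ContDiff 𝕜 n f)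
    (a b c : ι → 𝕜) (z : 𝕜) :
    iteratedDeriv n (fun z => ∑ j ∈ s, a j * f (b j * z + c j)) z
      = ∑ j ∈ s, a j * b j ^ n * iteratedDeriv n f (b j * z + c j) := by
  have hterm : ∀ j, ContDiff 𝕜 n fun z => a j * f (b j * z + c j) := fun j => by fun_prop
  rw [iteratedDeriv_fun_sum fun j _ => (hterm j).contDiffAt]
  simp only [iteratedDeriv_const_mul_field, iteratedDeriv_comp_mul_add hf, mul_assoc]

end IteratedDeriv

section Vandermonde

variable {K : Type*} [Field K] {N : ℕ}

theorem sum_pow_eq_zero_of_pow_eq_one {u : K} (huN : u ^ N = 1) (hu : u ≠ 1) :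
    ∑ k : Fin N, u ^ (k : ℕ) = 0 := by
  rw [Fin.sum_univ_eq_sum_range (u ^ ·), geom_sum_eq hu, huN, sub_self, zero_div]

theorem vandermonde_mul_smul_transpose_vandermonde_inv {v : Fin N → K}
    (hv : Function.Injective v) (hvN : ∀ i, v i ^ N = 1) (hN : (N : K) ≠ 0) :
    vandermonde v * ((N : K)⁻¹ • (vandermonde fun j => (v j)⁻¹)ᵀ) = 1 := by
  have hv0 : ∀ i, v i ≠ 0 := fun i h => by
    have := hvN i
    rw [h, zero_pow (by rintro rfl; simp at hN)] at this
    exact zero_ne_one this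
  ext i k
  rw [Matrix.mul_smul, Matrix.smul_apply, vandermonde_mul_vandermonde_transpose, smul_eq_mul]
  by_cases hik : i = k
  · subst hik
    simp [hv0 i, hN]
  · have hu : v i * (v k)⁻¹ ≠ 1 := fun h => hik (hv (eq_of_mul_inv_eq_one h))
    rw [sum_pow_eq_zero_of_pow_eq_one (by rw [mul_pow, inv_pow, hvN, hvN, inv_one, one_mul]) hu]
    simp [hik]

end Vandermonde

theorem norm_vecMul_smul_transpose_vandermonde_inv_le {K : Type*} [RCLike K] {N : ℕ}
    {v : Fin N → K} (hv : ∀ i, ‖v i‖ = 1) (s : Fin N → K) (j : Fin N) :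
    ‖(s ᵥ* ((N : K)⁻¹ • (vandermonde fun j => (v j)⁻¹)ᵀ)) j‖ ≤ ⨆ m, ‖s m‖ := by
  have hN : (0 : ℝ) < N := by exact_mod_cast j.pos
  calc ‖(s ᵥ* ((N : K)⁻¹ • (vandermonde fun j => (v j)⁻¹)ᵀ)) j‖
      ≤ ∑ m, ‖s m‖ / N := by
        simp only [vecMul, dotProduct, Matrix.smul_apply]
        refine (norm_sum_le _ _).trans_eq (sum_congr rfl fun m _ => ?_)
        simp [hv, div_eq_mul_inv]
    _ ≤ ∑ _m : Fin N, (⨆ m, ‖s m‖) / N := by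
        gcongr with m
        exact le_ciSup (f := fun m => ‖s m‖) (Set.finite_range _).bddAbove m
    _ = ⨆ m, ‖s m‖ := by
        rw [sum_const, card_univ, Fintype.card_fin, nsmul_eq_mul, mul_div_cancel₀ _ hN.ne']

theorem IsPrimitiveRoot.injective_pow_succ {R : Type*} [CommRing R] [IsDomain R] {ζ : R} {N : ℕ}
    (hζ : IsPrimitiveRoot ζ N) :
    Function.Injective fun j : Fin N => ζ ^ (j.1 + 1) := by
  intro i k h
  have hζ0 : ζ ≠ 0 := hζ.ne_zero i.pos.ne'
  simp only [pow_succ] at h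
  exact Fin.ext (hζ.pow_inj i.2 k.2 (mul_right_cancel₀ hζ0 h))

theorem stmt12 (N : ℕ) (hN : 1 ≤ N) (φ : ℂ → ℂ) (hφ : Differentiable ℂ φ)
    (ξ z₀ : ℂ) (hnz : ∀ n : ℕ, iteratedDeriv n φ ξ ≠ 0) (g : Fin N → ℂ) :
    let b : Fin N → ℂ := fun j => Complex.exp (2 * Real.pi * Complex.I * (j.1 + 1) / N)
    let c : Fin N → ℂ := fun j => ξ - b j * z₀
    ∃ a : Fin N → ℂ,
      (∀ n : Fin N, iteratedDeriv n.1 (fun z => ∑ j, a j * φ (b j * z + c j)) z₀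
          / (n.1.factorial : ℂ) = g n) ∧
      (∀ a' : Fin N → ℂ,
        (∀ n : Fin N, iteratedDeriv n.1 (fun z => ∑ j, a' j * φ (b j * z + c j)) z₀
            / (n.1.factorial : ℂ) = g n) → a' = a) ∧
      ∀ j, ‖a j‖ ≤
        ⨆ n : Fin N, ‖g n * n.1.factorial / iteratedDeriv n.1 φ ξ‖ := by
  intro b c
  have hζ : IsPrimitiveRoot (exp (2 * Real.pi * I / N)) N := isPrimitiveRoot_exp N (by omega)
  have hb : b = fun j => exp (2 * Real.pi * I / N) ^ (j.1 + 1) := by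
    funext j
    rw [← exp_nat_mul]
    simp only [b]
    push_cast
    ring_nf
  have hbN : ∀ j, b j ^ N = 1 := fun j => by
    rw [hb, ← pow_mul, pow_mul', hζ.pow_eq_one, one_pow]
  have hVW := vandermonde_mul_smul_transpose_vandermonde_inv (hb ▸ hζ.injective_pow_succ) hbN
    (Nat.cast_ne_zero.2 (by omega))
  set s : Fin N → ℂ := fun n => g n * n.1.factorial / iteratedDeriv n.1 φ ξ
  have interp_iff : ∀ a : Fin N → ℂ,
      (∀ n : Fin N, iteratedDeriv n.1 (fun z => ∑ j, a j * φ (b j * z + c j)) z₀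
          / (n.1.factorial : ℂ) = g n) ↔ a ᵥ* vandermonde b = s := by
    intro a
    simp only [funext_iff, vecMul, dotProduct, vandermonde_apply,
      iteratedDeriv_sum_mul_comp_mul_add _ hφ.contDiff, c, add_sub_cancel, ← sum_mul, s]
    refine forall_congr' fun n => ?_
    rw [div_eq_iff (Nat.cast_ne_zero.2 n.1.factorial_ne_zero), eq_div_iff (hnz n)]
  refine ⟨s ᵥ* ((N : ℂ)⁻¹ • (vandermonde fun j => (b j)⁻¹)ᵀ), (interp_iff _).2 ?_,
    fun a' ha' => ?_, norm_vecMul_smul_transpose_vandermonde_inv_le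
      (fun j => norm_eq_one_of_pow_eq_one (hbN j) (by omega)) s⟩
  · rw [vecMul_vecMul, mul_eq_one_comm.1 hVW, vecMul_one]
  · rw [← (interp_iff a').1 ha', vecMul_vecMul, hVW, vecMul_one]
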